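/- For every integer n ≥ 2, every vector v ∈ ℝⁿ and every radius r > 0, ∫_{S^{n-1}_r} ⟨v,y⟩ e^{−2⟨v,y⟩} dσ_r(y) = − r^n · |v| · γ_n'(2r|v|) · vol(S^{n-2}). -/

import Mathlib

open MeasureTheory

/-- The `(n-1)`-dimensional surface measure on the sphere of radius `r` centered at the
origin of `ℝⁿ`: the pushforward of the canonical surface measure `volume.toSphere` on the
unit sphere under the scaling `y ↦ r • y`, scaled by the factor `r^(n-1)`. -/
noncomputable def sphereMeasure (n : ℕ) (r : ℝ) :
    Measure (EuclideanSpace ℝ (Fin n)) :=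
  ENNReal.ofReal (r ^ (n - 1)) •
    Measure.map
      (fun y : Metric.sphere (0 : EuclideanSpace ℝ (Fin n)) 1 =>
        r • (y : EuclideanSpace ℝ (Fin n)))
      (volume : Measure (EuclideanSpace ℝ (Fin n))).toSphere

/-- `vol(S^d)`: the total surface measure of the unit sphere `S^d ⊆ ℝ^(d+1)`
(so `vol(S⁰) = 2`). -/
noncomputable def sphereVol (d : ℕ) : ℝ :=
  (sphereMeasure (d + 1) 1 Set.univ).toReal

/-- For an integer `n ≥ 2`, `γ_n (t) = ∫₀^π e^{t cos α} (sin α)^(n-2) dα`. -/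
noncomputable def gammaN (n : ℕ) (t : ℝ) : ℝ :=
  ∫ α in (0:ℝ)..Real.pi, Real.exp (t * Real.cos α) * Real.sin α ^ (n - 2)

/-- The derivative `γ_n' (t) = ∫₀^π cos α · e^{t cos α} (sin α)^(n-2) dα`. -/
noncomputable def gammaN' (n : ℕ) (t : ℝ) : ℝ :=
  ∫ α in (0:ℝ)..Real.pi, Real.cos α * Real.exp (t * Real.cos α) * Real.sin α ^ (n - 2)

/-!
Weighting by the indicator of the unit ball turns an integral of `θ ↦ h ⟪v, θ⟫` over the unit
sphere of `ℝ^(m+2)` into a volume integral (polar decomposition). A reflection moves `v` to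
`‖v‖ e₀`; writing `x = (x₀, z)` and integrating out the direction of `z ∈ ℝ^(m+1)` leaves an
integral over the upper half-plane in `(x₀, ‖z‖)`, which planar polar coordinates turn into
`vol(S^m) ∫₀^π sin^m α h(‖v‖ cos α) dα`. For `h u = r u e^{-2ru}`, the substitution `α ↦ π - α`
identifies the angular integral with `-r ‖v‖ γ'_{m+2}(2r‖v‖)`.
-/

open Set Metric Real

local notation "𝔼" n:max => EuclideanSpace ℝ (Fin n)

theorem MeasureTheory.Measure.integral_volumeIoiPow (n : ℕ) (w : ℝ → ℝ) :
    ∫ r : Ioi (0 : ℝ), w r ∂Measure.volumeIoiPow n = ∫ s in Ioi (0 : ℝ), s ^ n * w s := by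
  simp only [Measure.volumeIoiPow, ENNReal.ofReal]
  rw [integral_withDensity_eq_integral_smul (measurable_subtype_coe.pow_const _).real_toNNReal,
    integral_subtype_comap measurableSet_Ioi fun s : ℝ ↦ Real.toNNReal (s ^ n) • w s]
  refine setIntegral_congr_fun measurableSet_Ioi fun s hs ↦ ?_
  rw [NNReal.smul_def, Real.coe_toNNReal _ (pow_nonneg (le_of_lt hs) _), smul_eq_mul]

section PolarDecomposition

variable {E : Type*} [NormedAddCommGroup E] [NormedSpace ℝ E] [MeasurableSpace E] [BorelSpace E]
  [FiniteDimensional ℝ E] [Nontrivial E] (μ : Measure E) [μ.IsAddHaarMeasure]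

theorem integral_comp_smul_inv_norm_mul_fun_norm (g : E → ℝ) (w : ℝ → ℝ) :
    ∫ x, g (‖x‖⁻¹ • x) * w ‖x‖ ∂μ =
      (∫ θ : sphere (0 : E) 1, g θ ∂μ.toSphere) *
        ∫ s in Ioi (0 : ℝ), s ^ (Module.finrank ℝ E - 1) * w s := by
  rw [← Measure.integral_volumeIoiPow, ← integral_prod_mul (L := ℝ),
    ← μ.measurePreserving_homeomorphUnitSphereProd.integral_comp (Homeomorph.measurableEmbedding _)]
  conv_lhs => rw [← restrict_compl_singleton (μ := μ) 0,
    ← integral_subtype_comap (measurableSet_singleton _).compl]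
  simp only [homeomorphUnitSphereProd_apply_fst_coe, homeomorphUnitSphereProd_apply_snd_coe]

theorem integral_fun_norm_eq_toSphere_mul (f : ℝ → ℝ) :
    ∫ x, f ‖x‖ ∂μ =
      μ.toSphere.real univ * ∫ s in Ioi (0 : ℝ), s ^ (Module.finrank ℝ E - 1) * f s := by
  rw [integral_fun_norm_addHaar, Measure.toSphere_real_apply_univ, nsmul_eq_mul, smul_eq_mul,
    mul_assoc]
  rfl

end PolarDecomposition

section Rotation

variable {E : Type*} [NormedAddCommGroup E] [InnerProductSpace ℝ E] [FiniteDimensional ℝ E]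
  [MeasurableSpace E] [BorelSpace E]

theorem integral_comp_inner_norm_of_norm_eq {u v : E} (huv : ‖u‖ = ‖v‖) (F : ℝ → ℝ → ℝ) :
    ∫ x, F (inner ℝ v x) ‖x‖ = ∫ x, F (inner ℝ u x) ‖x‖ := by
  set f := Submodule.reflection (ℝ ∙ (v - u))ᗮ
  have hfv : f v = u := Submodule.reflection_sub huv.symm
  calc ∫ x, F (inner ℝ v x) ‖x‖ = ∫ x, F (inner ℝ u (f x)) ‖f x‖ := by
        simp_rw [← hfv, f.inner_map_map, f.norm_map]
    _ = ∫ x, F (inner ℝ u x) ‖x‖ :=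
        f.measurePreserving.integral_comp f.toMeasurableEquiv.measurableEmbedding
          (fun y ↦ F (inner ℝ u y) ‖y‖)

end Rotation

theorem integral_upperHalfPlane_eq_integral_polarCoord (f : ℝ × ℝ → ℝ) :
    ∫ p in univ ×ˢ Ioi (0 : ℝ), f p =
      ∫ q in Ioi (0 : ℝ) ×ˢ Ioo 0 π, q.1 * f (q.1 * cos q.2, q.1 * sin q.2) := by
  have hsub : Ioi (0 : ℝ) ×ˢ Ioo 0 π ⊆ polarCoord.target := by
    rw [polarCoord_target]
    exact prod_mono le_rfl (Ioo_subset_Ioo (by linarith [pi_pos]) le_rfl)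
  rw [← integral_indicator (MeasurableSet.univ.prod measurableSet_Ioi),
    ← integral_comp_polarCoord_symm, ← inter_eq_right.2 hsub,
    ← setIntegral_indicator (measurableSet_Ioi.prod measurableSet_Ioo)]
  refine setIntegral_congr_fun polarCoord.open_target.measurableSet fun q hq ↦ ?_
  rw [polarCoord_target] at hq
  obtain ⟨ρ, α⟩ := q
  obtain ⟨hρ, hα⟩ := hq
  have hupper : ρ * sin α ∈ Ioi 0 ↔ α ∈ Ioo 0 π := by
    refine ⟨fun h ↦ ⟨?_, hα.2⟩, fun h ↦ mul_pos hρ (sin_pos_of_pos_of_lt_pi h.1 h.2)⟩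
    by_contra hα0
    exact (pos_of_mul_pos_right h hρ.le).not_ge
      (sin_nonpos_of_nonpos_of_neg_pi_le (not_lt.1 hα0) hα.1.le)
  by_cases hα' : α ∈ Ioo 0 π
  · simp [indicator, hα', hupper.2 hα', hρ, polarCoord_symm_apply]
  · simp [indicator, hα', mt hupper.1 hα', polarCoord_symm_apply]

namespace EuclideanSpace

def splitFirst (m : ℕ) : (𝔼 (m + 1)) ≃ᵐ ℝ × 𝔼 m :=
  (MeasurableEquiv.toLp 2 (Fin (m + 1) → ℝ)).symm.trans
    ((MeasurableEquiv.piFinSuccAbove (fun _ ↦ ℝ) 0).trans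
      ((MeasurableEquiv.refl ℝ).prodCongr (MeasurableEquiv.toLp 2 (Fin m → ℝ))))

variable {m : ℕ}

theorem measurePreserving_splitFirst (m : ℕ) : MeasurePreserving (splitFirst m) :=
  ((MeasurePreserving.id volume).prod (PiLp.volume_preserving_toLp (Fin m))).comp
    ((volume_preserving_piFinSuccAbove (fun _ : Fin (m + 1) ↦ ℝ) 0).comp
      (EuclideanSpace.volume_preserving_symm_measurableEquiv_toLp (Fin (m + 1))))

theorem splitFirst_fst (x : 𝔼 (m + 1)) : (splitFirst m x).1 = x 0 := rfl

theorem norm_eq_sqrt_splitFirst (x : 𝔼 (m + 1)) :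
    ‖x‖ = √((splitFirst m x).1 ^ 2 + ‖(splitFirst m x).2‖ ^ 2) := by
  rw [EuclideanSpace.norm_eq, EuclideanSpace.norm_eq, sq_sqrt (by positivity),
    Fin.sum_univ_succ]
  simp [splitFirst, MeasurableEquiv.prodCongr, Fin.tail]

end EuclideanSpace

section Slicing

open EuclideanSpace

variable {m : ℕ}

theorem integral_comp_apply_zero_norm_eq_integral_prod (F : ℝ → ℝ → ℝ) :
    ∫ x : 𝔼 (m + 1), F (x 0) ‖x‖ = ∫ p : ℝ × 𝔼 m, F p.1 √(p.1 ^ 2 + ‖p.2‖ ^ 2) := by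
  simp_rw [norm_eq_sqrt_splitFirst, ← splitFirst_fst]
  exact (measurePreserving_splitFirst m).integral_comp' fun p ↦ F p.1 √(p.1 ^ 2 + ‖p.2‖ ^ 2)

theorem integrable_comp_apply_zero_norm_iff (F : ℝ → ℝ → ℝ) :
    Integrable (fun x : 𝔼 (m + 1) ↦ F (x 0) ‖x‖) ↔
      Integrable (fun p : ℝ × 𝔼 m ↦ F p.1 √(p.1 ^ 2 + ‖p.2‖ ^ 2)) := by
  simp_rw [norm_eq_sqrt_splitFirst, ← splitFirst_fst]
  exact (measurePreserving_splitFirst m).integrable_comp_emb (splitFirst m).measurableEmbedding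
    (g := fun p ↦ F p.1 √(p.1 ^ 2 + ‖p.2‖ ^ 2))

theorem integrableOn_upperHalfPlane_of_integrable {F : ℝ → ℝ → ℝ}
    (hF_meas : Measurable (Function.uncurry F)) (hF : Integrable fun x : 𝔼 (m + 2) ↦ F (x 0) ‖x‖) :
    IntegrableOn (fun p : ℝ × ℝ ↦ p.2 ^ m * F p.1 √(p.1 ^ 2 + p.2 ^ 2)) (univ ×ˢ Ioi 0) := by
  rw [integrable_comp_apply_zero_norm_iff] at hF
  obtain ⟨hslices, hnorms⟩ := (integrable_prod_iff hF.1).1 hF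
  have hmeas : Measurable fun p : ℝ × ℝ ↦ p.2 ^ m * F p.1 √(p.1 ^ 2 + p.2 ^ 2) :=
    (measurable_snd.pow_const m).mul (hF_meas.comp (measurable_fst.prodMk
      (by fun_prop : Measurable fun p : ℝ × ℝ ↦ √(p.1 ^ 2 + p.2 ^ 2))))
  set V := (volume : Measure (𝔼 (m + 1))).toSphere.real univ
  have hV : V ≠ 0 := by
    have : NeZero (volume : Measure (𝔼 (m + 1))).toSphere := ⟨Measure.toSphere_ne_zero _⟩
    exact measureReal_univ_pos.ne'
  rw [IntegrableOn, Measure.volume_eq_prod, ← Measure.prod_restrict, Measure.restrict_univ,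
    integrable_prod_iff hmeas.aestronglyMeasurable]
  refine ⟨hslices.mono fun a ha ↦ ?_, ?_⟩
  · simpa [IntegrableOn, finrank_euclideanSpace_fin] using
      (integrable_fun_norm_addHaar volume (f := fun s ↦ F a √(a ^ 2 + s ^ 2))).1 ha
  · refine (hnorms.const_mul V⁻¹).congr (ae_of_all _ fun a ↦ ?_)
    simp only
    rw [integral_fun_norm_eq_toSphere_mul volume (fun s ↦ ‖F a √(a ^ 2 + s ^ 2)‖),
      finrank_euclideanSpace_fin, inv_mul_cancel_left₀ hV]
    refine setIntegral_congr_fun measurableSet_Ioi fun s hs ↦ ?_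
    simp [norm_mul, abs_of_pos (mem_Ioi.1 hs)]

theorem integral_comp_apply_zero_norm (F : ℝ → ℝ → ℝ) (hF_meas : Measurable (Function.uncurry F))
    (hF : Integrable fun x : 𝔼 (m + 2) ↦ F (x 0) ‖x‖) :
    ∫ x : 𝔼 (m + 2), F (x 0) ‖x‖ =
      (volume : Measure (𝔼 (m + 1))).toSphere.real univ *
        ∫ q in Ioi (0 : ℝ) ×ˢ Ioo 0 π, q.1 ^ (m + 1) * sin q.2 ^ m * F (q.1 * cos q.2) q.1 := by
  have hslice (a : ℝ) : ∫ z : 𝔼 (m + 1), F a √(a ^ 2 + ‖z‖ ^ 2) =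
      (volume : Measure (𝔼 (m + 1))).toSphere.real univ *
        ∫ s in Ioi (0 : ℝ), s ^ m * F a √(a ^ 2 + s ^ 2) := by
    simpa [finrank_euclideanSpace_fin] using
      integral_fun_norm_eq_toSphere_mul (volume : Measure (𝔼 (m + 1)))
        (fun s ↦ F a √(a ^ 2 + s ^ 2))
  rw [integral_comp_apply_zero_norm_eq_integral_prod, Measure.volume_eq_prod,
    integral_prod (μ := volume) (ν := volume) _ ((integrable_comp_apply_zero_norm_iff F).1 hF),
    integral_congr_ae (ae_of_all _ hslice), integral_const_mul, Measure.volume_eq_prod,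
    ← setIntegral_univ,
    ← setIntegral_prod _ (integrableOn_upperHalfPlane_of_integrable hF_meas hF),
    ← Measure.volume_eq_prod, integral_upperHalfPlane_eq_integral_polarCoord]
  congr 1
  refine setIntegral_congr_fun (measurableSet_Ioi.prod measurableSet_Ioo) fun q hq ↦ ?_
  have hρ : √((q.1 * cos q.2) ^ 2 + (q.1 * sin q.2) ^ 2) = q.1 := by
    rw [mul_pow, mul_pow, ← mul_add, cos_sq_add_sin_sq, mul_one, sqrt_sq hq.1.out.le]
  simp only [hρ]
  ring

end Slicing

theorem integral_Ioi_pow_mul_indicator_Iio_one (n : ℕ) :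
    ∫ s in Ioi (0 : ℝ), s ^ n * (Iio 1).indicator 1 s = 1 / (n + 1) := by
  have : (fun s : ℝ ↦ s ^ n * (Iio 1).indicator 1 s) = (Iio 1).indicator (· ^ n) := by
    ext s
    by_cases hs : s ∈ Iio 1 <;> simp [hs]
  rw [this, setIntegral_indicator measurableSet_Iio, Ioi_inter_Iio, ← integral_Ioc_eq_integral_Ioo,
    ← intervalIntegral.integral_of_le zero_le_one, integral_pow]
  simp

theorem integrable_comp_inv_norm_mul_apply_zero_mul_indicator {m : ℕ} {h : ℝ → ℝ}
    (hh : Continuous h) (c : ℝ) :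
    Integrable fun x : 𝔼 (m + 1) ↦ h (‖x‖⁻¹ * (c * x 0)) * (Iio 1).indicator 1 ‖x‖ := by
  obtain ⟨M, hM⟩ := isCompact_Icc.exists_bound_of_continuousOn (s := Icc (-|c|) |c|)
    hh.continuousOn
  have harg (x : 𝔼 (m + 1)) : ‖x‖⁻¹ * (c * x 0) ∈ Icc (-|c|) |c| := by
    refine abs_le.1 ?_
    rw [abs_mul, abs_mul, abs_inv, abs_norm, mul_left_comm]
    exact mul_le_of_le_one_right (abs_nonneg c)
      (inv_mul_le_one_of_le₀ (PiLp.norm_apply_le x 0) (norm_nonneg x))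
  have : (fun x : 𝔼 (m + 1) ↦ h (‖x‖⁻¹ * (c * x 0)) * (Iio 1).indicator 1 ‖x‖) =
      (ball 0 1).indicator fun x ↦ h (‖x‖⁻¹ * (c * x 0)) := by
    ext x
    by_cases hx : ‖x‖ < 1 <;> simp [hx]
  rw [this, integrable_indicator_iff measurableSet_ball]
  exact Measure.integrableOn_of_bounded measure_ball_lt_top.ne
    (hh.measurable.comp (by fun_prop)).aestronglyMeasurable (ae_of_all _ fun x ↦ hM _ (harg x))

theorem integral_toSphere_comp_inner (m : ℕ) (v : 𝔼 (m + 2)) {h : ℝ → ℝ} (hh : Continuous h) :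
    ∫ θ : sphere (0 : 𝔼 (m + 2)) 1, h (inner ℝ v (θ : 𝔼 (m + 2))) ∂volume.toSphere =
      (volume : Measure (𝔼 (m + 1))).toSphere.real univ *
        ∫ α in (0 : ℝ)..π, sin α ^ m * h (‖v‖ * cos α) := by
  set w : ℝ → ℝ := (Iio 1).indicator 1
  set Φ : ℝ → ℝ → ℝ := fun a ρ ↦ h (ρ⁻¹ * a) * w ρ
  have hC : ∫ s in Ioi (0 : ℝ), s ^ (m + 1) * w s ≠ 0 := by
    rw [integral_Ioi_pow_mul_indicator_Iio_one]
    positivity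
  have hΦ_meas : Measurable (Function.uncurry fun a ρ ↦ Φ (‖v‖ * a) ρ) :=
    (hh.measurable.comp (by fun_prop)).mul
      ((measurable_one.indicator measurableSet_Iio).comp measurable_snd)
  have hu : ‖‖v‖ • EuclideanSpace.single (0 : Fin (m + 2)) (1 : ℝ)‖ = ‖v‖ := by simp [norm_smul]
  refine mul_right_cancel₀ hC ?_
  calc (∫ θ : sphere (0 : 𝔼 (m + 2)) 1, h (inner ℝ v (θ : 𝔼 (m + 2))) ∂volume.toSphere) *
        ∫ s in Ioi (0 : ℝ), s ^ (m + 1) * w s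
      = ∫ x : 𝔼 (m + 2), h (inner ℝ v (‖x‖⁻¹ • x)) * w ‖x‖ := by
        simpa using (integral_comp_smul_inv_norm_mul_fun_norm volume (h ∘ inner ℝ v) w).symm
    _ = ∫ x : 𝔼 (m + 2), Φ (inner ℝ v x) ‖x‖ := by simp_rw [real_inner_smul_right]; rfl
    _ = ∫ x : 𝔼 (m + 2), Φ (‖v‖ * x 0) ‖x‖ := by
        rw [integral_comp_inner_norm_of_norm_eq hu]
        simp [real_inner_smul_left, EuclideanSpace.inner_single_left]
    _ = (volume : Measure (𝔼 (m + 1))).toSphere.real univ *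
          ∫ q in Ioi (0 : ℝ) ×ˢ Ioo 0 π,
            q.1 ^ (m + 1) * sin q.2 ^ m * Φ (‖v‖ * (q.1 * cos q.2)) q.1 :=
        integral_comp_apply_zero_norm _ hΦ_meas
          (integrable_comp_inv_norm_mul_apply_zero_mul_indicator hh ‖v‖)
    _ = (volume : Measure (𝔼 (m + 1))).toSphere.real univ *
          ((∫ s in Ioi (0 : ℝ), s ^ (m + 1) * w s) *
            ∫ α in Ioo 0 π, sin α ^ m * h (‖v‖ * cos α)) := by
        rw [← setIntegral_prod_mul]
        refine congrArg _ (setIntegral_congr_fun (measurableSet_Ioi.prod measurableSet_Ioo)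
          fun q hq ↦ ?_)
        have hangle : q.1⁻¹ * (‖v‖ * (q.1 * cos q.2)) = ‖v‖ * cos q.2 := by
          field_simp [hq.1.out.ne']
        simp only [Φ, hangle]
        ring
    _ = _ := by
        rw [← integral_Ioc_eq_integral_Ioo, ← intervalIntegral.integral_of_le pi_pos.le]
        ring

theorem integral_sphereMeasure {n : ℕ} {r : ℝ} (hr : 0 ≤ r) {f : 𝔼 n → ℝ} (hf : Continuous f) :
    ∫ y, f y ∂sphereMeasure n r =
      r ^ (n - 1) * ∫ θ : sphere (0 : 𝔼 n) 1, f (r • (θ : 𝔼 n)) ∂volume.toSphere := by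
  rw [sphereMeasure, integral_smul_measure, integral_map (by fun_prop) hf.aestronglyMeasurable,
    ENNReal.toReal_ofReal (pow_nonneg hr _), smul_eq_mul]

theorem sphereVol_eq_toSphere_real (m : ℕ) :
    sphereVol m = (volume : Measure (𝔼 (m + 1))).toSphere.real univ := by
  rw [sphereVol, sphereMeasure, Measure.smul_apply, Measure.map_apply (by fun_prop)
    MeasurableSet.univ]
  simp only [one_pow, ENNReal.ofReal_one, one_smul, preimage_univ]
  rfl

theorem gammaN'_neg (n : ℕ) (t : ℝ) : gammaN' n (-t) = -gammaN' n t := by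
  have := intervalIntegral.integral_comp_sub_left
    (fun α ↦ cos α * exp (t * cos α) * sin α ^ (n - 2)) π (a := 0) (b := π)
  simp only [sub_zero, sub_self, cos_pi_sub, sin_pi_sub, mul_neg, neg_mul,
    intervalIntegral.integral_neg] at this
  rw [gammaN', gammaN', ← this, neg_neg]
  simp only [neg_mul]

theorem integral_sin_pow_mul_cos_mul_exp_cos (m : ℕ) (r c : ℝ) :
    ∫ α in (0 : ℝ)..π, sin α ^ m * (r * (c * cos α) * exp (-(2 * (r * (c * cos α))))) =
      -(r * c * gammaN' (m + 2) (2 * r * c)) := by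
  rw [neg_mul_eq_mul_neg, ← gammaN'_neg, gammaN', ← intervalIntegral.integral_const_mul]
  congr 1 with α
  rw [Nat.add_sub_cancel, show -(2 * (r * (c * cos α))) = -(2 * r * c) * cos α by ring]
  ring

/-- For every integer `n ≥ 2`, every `v ∈ ℝⁿ` and every radius `r > 0`,
`∫_{S^{n-1}_r} ⟨v,y⟩ e^{−2⟨v,y⟩} dσ_r(y) = − r^n · |v| · γ_n'(2r|v|) · vol(S^{n-2})`. -/
theorem integral_inner_mul_exp_inner_sphere (n : ℕ) (hn : 2 ≤ n)
    (v : EuclideanSpace ℝ (Fin n)) (r : ℝ) (hr : 0 < r) :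
    ∫ y, (inner ℝ v y : ℝ) * Real.exp (-(2 * (inner ℝ v y : ℝ))) ∂(sphereMeasure n r) =
      -(r ^ n * ‖v‖ * gammaN' n (2 * r * ‖v‖) * sphereVol (n - 2)) := by
  obtain ⟨m, rfl⟩ := Nat.exists_eq_add_of_le' hn
  rw [integral_sphereMeasure hr.le (by fun_prop)]
  simp_rw [real_inner_smul_right]
  rw [integral_toSphere_comp_inner m v (h := fun u ↦ r * u * exp (-(2 * (r * u)))) (by fun_prop),
    integral_sin_pow_mul_cos_mul_exp_cos, ← sphereVol_eq_toSphere_real, Nat.add_sub_cancel,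
    Nat.add_succ_sub_one]
  ring
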